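/- Let α ∈ ℝ^{e×d} (e ≥ d ≥ 1) be a non-degenerate coefficient matrix and O the associated optimization map. If m is a constraint matrix with P^α_m ≠ ∅, then P^α_{O(m)} = P^α_m and every constraint in the definition of P^α_{O(m)} is active, i.e., for every i ∈ {1,…,e} there is a point x in the closure of P^α_m with (αx)_i = O(m)̲_i, and a point y in the closure with (αy)_i = O(m)̄_i. -/

import Mathlib

open Set

/-- A constraint matrix: a pair of vectors of lower and upper bounds in `ℝ^e`. -/
abbrev CM (e : ℕ) := (Fin e → ℝ) × (Fin e → ℝ)

/-- The open polytope `P^α_m` associated with a coefficient matrix `α` and a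
constraint matrix `m`. -/
def PolySet {e d : ℕ} (α : Matrix (Fin e) (Fin d) ℝ) (m : CM e) : Set (Fin d → ℝ) :=
  {x | ∀ i, m.1 i < α.mulVec x i ∧ α.mulVec x i < m.2 i}

/-- A coefficient matrix is non-degenerate if its rows are nonzero and
pairwise non-proportional. -/
def Nondeg {e d : ℕ} (α : Matrix (Fin e) (Fin d) ℝ) : Prop :=
  (∀ i, α i ≠ 0) ∧ ∀ i j : Fin e, i ≠ j → ∀ c : ℝ, α i ≠ c • α j

/-- The set `Λ_i`: vectors `λ ∈ ℝ^e` supported on some `S` with `|S| ≤ d` which are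
the unique solution of `λᵀ α = α_i` with support in `S`. -/
def Lambda {e d : ℕ} (α : Matrix (Fin e) (Fin d) ℝ) (i : Fin e) : Set (Fin e → ℝ) :=
  {l | ∃ S : Finset (Fin e), S.card ≤ d ∧ (∀ k ∉ S, l k = 0) ∧
        (∀ j, ∑ k, l k * α k j = α i j) ∧
        ∀ l' : Fin e → ℝ, (∀ k ∉ S, l' k = 0) → (∀ j, ∑ k, l' k * α k j = α i j) → l' = l}

/-- `e̲_k(a,m)` -/
noncomputable def eLow {e : ℕ} (a : ℝ) (m : CM e) (k : Fin e) : ℝ :=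
  if 0 ≤ a then m.1 k else m.2 k

/-- `ē_k(a,m)` -/
noncomputable def eHigh {e : ℕ} (a : ℝ) (m : CM e) (k : Fin e) : ℝ :=
  if 0 ≤ a then m.2 k else m.1 k

/-- The optimized constraint matrix `O(m)`. -/
noncomputable def Opt {e d : ℕ} (α : Matrix (Fin e) (Fin d) ℝ) (m : CM e) : CM e :=
  (fun i => sSup ((fun l : Fin e → ℝ => ∑ k, l k * eLow (l k) m k) '' Lambda α i),
   fun i => sInf ((fun l : Fin e → ℝ => ∑ k, l k * eHigh (l k) m k) '' Lambda α i))

/-- Intersection constraint matrix `m ∩ m'`. -/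
def interCM {e : ℕ} (m m' : CM e) : CM e :=
  (fun i => max (m.1 i) (m'.1 i), fun i => min (m.2 i) (m'.2 i))

/-- Constraint-matrix inclusion `m ⊂ m'`. -/
def cmSub {e : ℕ} (m m' : CM e) : Prop := ∀ i, m'.1 i ≤ m.1 i ∧ m.2 i ≤ m'.2 i

/-!
Weak duality: for `λ ∈ Λ_i` and `x` in the closed polytope, `Σ λ_k e̲_k(λ_k, m) ≤ Σ λ_k (αx)_k =
(αx)_i`, strictly on the open polytope since `λ ≠ 0`; with `δ_i ∈ Λ_i` this gives
`P^α_{O(m)} = P^α_m`. For activity, minimise `(αx)_i` over the closed polytope. At a minimiser,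
Hahn–Banach separation from the closed cone of signed active rows (Farkas) writes `α_i = λᵀα` with
`λ` complementary-slack, and a conic Carathéodory reduction makes the support of `λ` linearly
independent. Then `λ ∈ Λ_i` and its dual value is the minimum. The upper bounds follow from the
symmetry `m ↦ (-m̄, -m̲)`, `x ↦ -x`.
-/

open Matrix Function Filter Topology

section

variable {e d : ℕ}

section Basic

variable {α : Matrix (Fin e) (Fin d) ℝ} {m : CM e}

def closedPolySet (α : Matrix (Fin e) (Fin d) ℝ) (m : CM e) : Set (Fin d → ℝ) :=
  {x | α *ᵥ x ∈ Icc m.1 m.2}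

lemma polySet_subset_closedPolySet : PolySet α m ⊆ closedPolySet α m :=
  fun _ hx => ⟨fun k => (hx k).1.le, fun k => (hx k).2.le⟩

lemma closedPolySet_subset_closure (hP : (PolySet α m).Nonempty) :
    closedPolySet α m ⊆ closure (PolySet α m) := by
  obtain ⟨x₀, hx₀⟩ := hP
  intro y hy
  refine closure_mono ?_ (segment_subset_closure_openSegment (right_mem_segment ℝ x₀ y))
  rintro _ ⟨a, b, ha, hb, hab, rfl⟩ k
  simp only [mulVec_add, mulVec_smul, Pi.add_apply, Pi.smul_apply, smul_eq_mul]
  have h₁ := hx₀ k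
  have h₂ : m.1 k ≤ (α *ᵥ y) k ∧ (α *ᵥ y) k ≤ m.2 k := ⟨hy.1 k, hy.2 k⟩
  have hcomb (c : ℝ) : a * c + b * c = c := by rw [← add_mul, hab, one_mul]
  constructor <;> linarith [hcomb (m.1 k), hcomb (m.2 k), mul_lt_mul_of_pos_left h₁.1 ha,
    mul_lt_mul_of_pos_left h₁.2 ha, mul_le_mul_of_nonneg_left h₂.1 hb.le,
    mul_le_mul_of_nonneg_left h₂.2 hb.le]

lemma polySet_neg_swap : PolySet α (-m.swap) = -PolySet α m := by
  ext x
  simp only [PolySet, Set.mem_neg, mem_ofPred_eq, mulVec_neg, Prod.fst_neg, Prod.snd_neg,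
    Prod.fst_swap, Prod.snd_swap, Pi.neg_apply, lt_neg, neg_lt, and_comm]

lemma closedPolySet_neg_swap : closedPolySet α (-m.swap) = -closedPolySet α m := by
  ext x
  simp only [closedPolySet, Set.mem_neg, mem_ofPred_eq, mem_Icc, mulVec_neg, Prod.fst_neg,
    Prod.snd_neg, Prod.fst_swap, Prod.snd_swap, le_neg, neg_le, and_comm]

end Basic

section Lambda

variable {α : Matrix (Fin e) (Fin d) ℝ} {i : Fin e} {l : Fin e → ℝ}

lemma linearIndepOn_iff_vecMul {s : Set (Fin e)} :
    LinearIndepOn ℝ α.row s ↔ ∀ g : Fin e → ℝ, support g ⊆ s → g ᵥ* α = 0 → g = 0 := by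
  classical
  rw [linearIndepOn_iff'']
  constructor
  · intro h g hgs hg
    have hsum : ∑ k ∈ (support g).toFinset, g k • α k = 0 := by
      rw [Finset.sum_subset (Finset.subset_univ _) fun k _ hk => by
        simp_all]
      exact (vecMul_eq_sum g α).symm.trans hg
    funext k
    by_contra hk
    exact hk (h _ g (by simpa using hgs) (by simp) hsum k (by simpa using hk))
  · intro h t g hts hgt hsum k _
    have hsupp : support g ⊆ t := fun k hk => by_contra fun hkt => hk (hgt k hkt)
    refine congrFun (h g (hsupp.trans hts) ?_) k
    rwa [vecMul_eq_sum, ← Finset.sum_subset (Finset.subset_univ t) fun k _ hk => by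
      simp [hgt k hk]]

lemma LinearIndepOn.eq_of_vecMul_eq {s : Set (Fin e)} (hs : LinearIndepOn ℝ α.row s)
    {l l' : Fin e → ℝ} (hl : support l ⊆ s) (hl' : support l' ⊆ s) (h : l ᵥ* α = l' ᵥ* α) :
    l = l' :=
  sub_eq_zero.1 <| linearIndepOn_iff_vecMul.1 hs _
    ((support_sub l l').trans (union_subset hl hl')) (by rw [sub_vecMul, h, sub_self])

lemma vecMul_eq_of_mem_Lambda (hl : l ∈ Lambda α i) : l ᵥ* α = α i := by
  obtain ⟨-, -, -, hsum, -⟩ := hl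
  exact funext hsum

lemma ne_zero_of_mem_Lambda (hrow : α i ≠ 0) (hl : l ∈ Lambda α i) : l ≠ 0 := by
  rintro rfl
  exact hrow (by simpa using (vecMul_eq_of_mem_Lambda hl).symm)

lemma finite_Lambda (α : Matrix (Fin e) (Fin d) ℝ) (i : Fin e) : (Lambda α i).Finite := by
  refine (finite_iUnion fun S : Finset (Fin e) => Subsingleton.finite (s := {l |
    (∀ k ∉ S, l k = 0) ∧ (∀ j, ∑ k, l k * α k j = α i j) ∧ ∀ l' : Fin e → ℝ,
      (∀ k ∉ S, l' k = 0) → (∀ j, ∑ k, l' k * α k j = α i j) → l' = l}) ?_).subset ?_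
  · rintro l ⟨-, -, huniq⟩ l' ⟨hS', hsum', -⟩
    exact (huniq l' hS' hsum').symm
  · rintro l ⟨S, -, h⟩
    exact mem_iUnion.2 ⟨S, h⟩

lemma mem_Lambda_of_linearIndepOn (hl : l ᵥ* α = α i)
    (hind : LinearIndepOn ℝ α.row (support l)) : l ∈ Lambda α i := by
  classical
  refine ⟨(support l).toFinset, ?_, fun k hk => by simpa using hk, congrFun hl,
    fun l' hl' hsum' => hind.eq_of_vecMul_eq ?_ subset_rfl ((funext hsum').trans hl.symm)⟩
  · simpa using hind.fintype_card_le_finrank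
  · exact fun k hk => by_contra fun hkl => hk (hl' k (by simpa using hkl))

lemma single_mem_Lambda (hrow : α i ≠ 0) : Pi.single i 1 ∈ Lambda α i :=
  mem_Lambda_of_linearIndepOn (single_one_vecMul i α)
    (by rw [Pi.support_single_of_ne one_ne_zero]; exact (linearIndepOn_singleton_iff ℝ).2 hrow)

end Lambda

section DualValue

variable {α : Matrix (Fin e) (Fin d) ℝ} {m : CM e} {i : Fin e} {l : Fin e → ℝ} {x : Fin d → ℝ}

noncomputable def dualValue (m : CM e) (l : Fin e → ℝ) : ℝ :=
  ∑ k, l k * eLow (l k) m k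

lemma mul_eLow_le {a v : ℝ} {k : Fin e} (h₁ : m.1 k ≤ v) (h₂ : v ≤ m.2 k) :
    a * eLow a m k ≤ a * v := by
  unfold eLow
  split_ifs with ha
  · exact mul_le_mul_of_nonneg_left h₁ ha
  · exact mul_le_mul_of_nonpos_left h₂ (not_le.1 ha).le

lemma mul_eLow_lt {a v : ℝ} {k : Fin e} (ha : a ≠ 0) (h₁ : m.1 k < v) (h₂ : v < m.2 k) :
    a * eLow a m k < a * v := by
  unfold eLow
  split_ifs with ha'
  · exact mul_lt_mul_of_pos_left h₁ (lt_of_le_of_ne ha' ha.symm)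
  · exact mul_lt_mul_of_neg_left h₂ (not_le.1 ha')

lemma dualValue_le (hx : x ∈ closedPolySet α m) : dualValue m l ≤ (l ᵥ* α) ⬝ᵥ x := by
  rw [← dotProduct_mulVec]
  exact Finset.sum_le_sum fun k _ => mul_eLow_le (hx.1 k) (hx.2 k)

lemma dualValue_lt (hl : l ≠ 0) (hx : x ∈ PolySet α m) : dualValue m l < (l ᵥ* α) ⬝ᵥ x := by
  obtain ⟨k, hk⟩ := Function.ne_iff.1 hl
  rw [← dotProduct_mulVec]
  exact Finset.sum_lt_sum (fun k _ => mul_eLow_le (hx k).1.le (hx k).2.le)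
    ⟨k, Finset.mem_univ k, mul_eLow_lt hk (hx k).1 (hx k).2⟩

lemma dualValue_le_opt_fst (hl : l ∈ Lambda α i) : dualValue m l ≤ (Opt α m).1 i :=
  le_csSup ((finite_Lambda α i).image _).bddAbove (mem_image_of_mem _ hl)

lemma opt_fst_le_mulVec (hΛ : (Lambda α i).Nonempty) (hx : x ∈ closedPolySet α m) :
    (Opt α m).1 i ≤ (α *ᵥ x) i :=
  csSup_le (hΛ.image _) <| forall_mem_image.2 fun l hl =>
    (dualValue_le hx).trans_eq (by rw [vecMul_eq_of_mem_Lambda hl]; rfl)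

lemma opt_fst_lt_mulVec (hrow : α i ≠ 0) (hx : x ∈ PolySet α m) :
    (Opt α m).1 i < (α *ᵥ x) i := by
  obtain ⟨l, hl, hlv⟩ := ((nonempty_of_mem (single_mem_Lambda hrow)).image (dualValue m)).csSup_mem
    ((finite_Lambda α i).image _)
  have := dualValue_lt (ne_zero_of_mem_Lambda hrow hl) hx
  rwa [vecMul_eq_of_mem_Lambda hl, hlv] at this

lemma fst_le_opt_fst (hrow : α i ≠ 0) : m.1 i ≤ (Opt α m).1 i := by
  have hval : dualValue m (Pi.single i 1) = m.1 i := by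
    rw [dualValue, Finset.sum_eq_single i (fun k _ hk => by simp [hk]) (by simp)]
    simp [eLow]
  exact hval ▸ dualValue_le_opt_fst (single_mem_Lambda hrow)

lemma opt_neg_swap_fst : (Opt α (-m.swap)).1 = -(Opt α m).2 := by
  funext i
  have heLow (a : ℝ) (k : Fin e) : eLow a (-m.swap) k = -eHigh a m k := by
    unfold eLow eHigh; split_ifs <;> rfl
  simp only [Opt, heLow, mul_neg, Finset.sum_neg_distrib, Pi.neg_apply, ← Real.sSup_neg,
    ← image_neg_eq_neg, image_image]

end DualValue

section Symmetry

variable {α : Matrix (Fin e) (Fin d) ℝ} {m : CM e} {i : Fin e} {x : Fin d → ℝ}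

lemma opt_snd_le_snd (hrow : α i ≠ 0) : (Opt α m).2 i ≤ m.2 i := by
  simpa [opt_neg_swap_fst] using fst_le_opt_fst (m := -m.swap) hrow

lemma mulVec_lt_opt_snd (hrow : α i ≠ 0) (hx : x ∈ PolySet α m) : (α *ᵥ x) i < (Opt α m).2 i := by
  have hx' : -x ∈ PolySet α (-m.swap) := by rwa [polySet_neg_swap, Set.neg_mem_neg]
  simpa [opt_neg_swap_fst, mulVec_neg] using opt_fst_lt_mulVec hrow hx'

lemma polySet_opt (hα : ∀ i, α i ≠ 0) : PolySet α (Opt α m) = PolySet α m := by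
  ext x
  refine ⟨fun hx i => ⟨?_, ?_⟩, fun hx i => ⟨?_, ?_⟩⟩
  · exact (fst_le_opt_fst (hα i)).trans_lt (hx i).1
  · exact (hx i).2.trans_le (opt_snd_le_snd (hα i))
  · exact opt_fst_lt_mulVec (hα i) hx
  · exact mulVec_lt_opt_snd (hα i) hx

end Symmetry

section Caratheodory

variable {α : Matrix (Fin e) (Fin d) ℝ}

lemma exists_nonneg_mul_support_ssubset {l : Fin e → ℝ}
    (hl : ¬LinearIndepOn ℝ α.row (support l)) :
    ∃ s : Fin e → ℝ, 0 ≤ s ∧ (s * l) ᵥ* α = l ᵥ* α ∧ support (s * l) ⊂ support l := by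
  obtain ⟨g, hgl, hg, hg0⟩ : ∃ g : Fin e → ℝ, support g ⊆ support l ∧ g ᵥ* α = 0 ∧ g ≠ 0 := by
    simpa [linearIndepOn_iff_vecMul] using hl
  have hgl' (k : Fin e) (hk : l k = 0) : g k = 0 := notMem_support.1 fun h => hgl h hk
  obtain ⟨k₁, hk₁⟩ := Function.ne_iff.1 hg0
  obtain ⟨k₀, -, hk₀⟩ := Finset.exists_max_image Finset.univ (fun k => |g k / l k|)
    ⟨k₁, Finset.mem_univ _⟩
  set ρ := g k₀ / l k₀
  have hρ : ρ ≠ 0 := abs_pos.1 <| (abs_pos.2 <| div_ne_zero hk₁ fun h => hk₁ (hgl' k₁ h)).trans_le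
    (hk₀ k₁ (Finset.mem_univ _))
  -- `l - ρ⁻¹ • g` vanishes at `k₀` and, as `|g k / l k|` is maximal there, keeps the signs of `l`
  refine ⟨fun k => 1 - g k / l k / ρ, fun k => ?_, ?_, ?_⟩
  · have := (le_abs_self _).trans <| (abs_div (g k / l k) ρ).trans_le <|
      (div_le_one (abs_pos.2 hρ)).2 (hk₀ k (Finset.mem_univ _))
    simpa using this
  · have hsl : (fun k => 1 - g k / l k / ρ) * l = l - ρ⁻¹ • g := by
      funext k
      by_cases hk : l k = 0
      · simp [hk, hgl' k hk]
      · simp only [Pi.mul_apply, Pi.sub_apply, Pi.smul_apply, smul_eq_mul]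
        field_simp
    rw [hsl, sub_vecMul, smul_vecMul, hg, smul_zero, sub_zero]
  · refine (support_mul_subset_right _ _).ssubset_of_mem_notMem (a := k₀) ?_ ?_
    · exact fun h => hρ (by simp [ρ, h])
    · simp [ρ, div_self hρ]

lemma exists_nonneg_mul_linearIndepOn (α : Matrix (Fin e) (Fin d) ℝ) (l : Fin e → ℝ) :
    ∃ s : Fin e → ℝ, 0 ≤ s ∧ (s * l) ᵥ* α = l ᵥ* α ∧ LinearIndepOn ℝ α.row (support (s * l)) := by
  induction hn : (support l).ncard using Nat.strong_induction_on generalizing l with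
  | _ n ih =>
    by_cases hl : LinearIndepOn ℝ α.row (support l)
    · exact ⟨1, zero_le_one, by rw [one_mul], by rwa [one_mul]⟩
    obtain ⟨s, hs, hsl, hsub⟩ := exists_nonneg_mul_support_ssubset hl
    obtain ⟨s', hs', hsl', hind⟩ := ih _ (hn ▸ ncard_lt_ncard hsub) (s * l) rfl
    refine ⟨s' * s, mul_nonneg hs' hs, ?_, ?_⟩ <;> rw [mul_assoc]
    · exact hsl'.trans hsl
    · exact hind

end Caratheodory

section ActiveCone

variable {α : Matrix (Fin e) (Fin d) ℝ} {m : CM e} {x : Fin d → ℝ}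

def compSlack (α : Matrix (Fin e) (Fin d) ℝ) (m : CM e) (x : Fin d → ℝ) : Set (Fin e → ℝ) :=
  {l | ∀ k, (0 < l k → (α *ᵥ x) k = m.1 k) ∧ (l k < 0 → (α *ᵥ x) k = m.2 k)}

def activeCone (α : Matrix (Fin e) (Fin d) ℝ) (m : CM e) (x : Fin d → ℝ) : Set (Fin d → ℝ) :=
  (· ᵥ* α) '' compSlack α m x

lemma mul_mem_compSlack {s l : Fin e → ℝ} (hs : 0 ≤ s) (hl : l ∈ compSlack α m x) :
    s * l ∈ compSlack α m x := fun k =>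
  ⟨fun h => (hl k).1 (pos_of_mul_pos_right h (hs k)),
    fun h => (hl k).2 (neg_of_mul_neg_right h (hs k))⟩

lemma add_mem_compSlack {l l' : Fin e → ℝ} (hl : l ∈ compSlack α m x)
    (hl' : l' ∈ compSlack α m x) : l + l' ∈ compSlack α m x := fun k => by
  constructor <;> intro h
  · rcases lt_or_ge 0 (l k) with hk | hk
    exacts [(hl k).1 hk, (hl' k).1 (by simp only [Pi.add_apply] at h; linarith)]
  · rcases lt_or_ge (l k) 0 with hk | hk
    exacts [(hl k).2 hk, (hl' k).2 (by simp only [Pi.add_apply] at h; linarith)]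

lemma single_mem_compSlack {k : Fin e} {a : ℝ} (h₁ : 0 < a → (α *ᵥ x) k = m.1 k)
    (h₂ : a < 0 → (α *ᵥ x) k = m.2 k) : Pi.single k a ∈ compSlack α m x := fun k' => by
  rcases eq_or_ne k' k with rfl | hk
  · simpa using ⟨h₁, h₂⟩
  · simp [hk]

lemma isClosed_compSlack : IsClosed (compSlack α m x) := by
  simp only [compSlack, ofPred_forall, ofPred_and, imp_iff_not_or, not_lt, ofPred_or]
  exact isClosed_iInter fun k =>
    ((isClosed_le (continuous_apply k) continuous_const).union isClosed_const).inter
      ((isClosed_le continuous_const (continuous_apply k)).union isClosed_const)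

lemma dualValue_eq_of_mem_compSlack {l : Fin e → ℝ} (hl : l ∈ compSlack α m x) :
    dualValue m l = (l ᵥ* α) ⬝ᵥ x := by
  rw [← dotProduct_mulVec]
  refine Finset.sum_congr rfl fun k _ => ?_
  rcases lt_trichotomy (l k) 0 with h | h | h
  · rw [eLow, if_neg h.not_ge, (hl k).2 h]
  · simp [h]
  · rw [eLow, if_pos h.le, (hl k).1 h]

lemma smul_mem_activeCone {v : Fin d → ℝ} (hv : v ∈ activeCone α m x) {t : ℝ} (ht : 0 ≤ t) :
    t • v ∈ activeCone α m x := by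
  obtain ⟨l, hl, rfl⟩ := hv
  exact ⟨t • l, mul_mem_compSlack (s := fun _ => t) (fun _ => ht) hl, smul_vecMul t l α⟩

lemma convex_activeCone : Convex ℝ (activeCone α m x) := by
  rintro _ ⟨l, hl, rfl⟩ _ ⟨l', hl', rfl⟩ a b ha hb -
  refine ⟨a • l + b • l', add_mem_compSlack ?_ ?_, by simp [add_vecMul, smul_vecMul]⟩
  exacts [mul_mem_compSlack (s := fun _ => a) (fun _ => ha) hl,
    mul_mem_compSlack (s := fun _ => b) (fun _ => hb) hl']

lemma isClosed_image_vecMul_of_linearIndepOn {S : Set (Fin e)} (hS : LinearIndepOn ℝ α.row S)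
    {C : Set (Fin e → ℝ)} (hC : IsClosed C) : IsClosed ((· ᵥ* α) '' (C ∩ {l | support l ⊆ S})) := by
  let V : Submodule ℝ (Fin e → ℝ) := Submodule.pi Sᶜ fun _ => ⊥
  have hV (l : Fin e → ℝ) : l ∈ V ↔ support l ⊆ S := by
    simp [V, Submodule.mem_pi, not_imp_comm]
  let T := (vecMulLinear α).domRestrict V
  have hT : LinearMap.ker T = ⊥ := by
    refine LinearMap.ker_eq_bot'.2 fun l hl => Subtype.ext ?_
    have hl' : l.1 ᵥ* α = 0 := hl
    exact hS.eq_of_vecMul_eq ((hV l).1 l.2) (by simp) (hl'.trans (zero_vecMul α).symm)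
  have := (LinearMap.isClosedEmbedding_of_injective hT).isClosedMap _
    (hC.preimage continuous_subtype_val)
  rw [show ⇑T = (· ᵥ* α) ∘ Subtype.val from rfl, image_comp, image_preimage_eq_inter_range,
    Subtype.range_coe_subtype] at this
  convert this using 3
  ext l
  exact (hV l).symm

lemma isClosed_activeCone : IsClosed (activeCone α m x) := by
  have hcover : activeCone α m x = ⋃ S : {S : Set (Fin e) // LinearIndepOn ℝ α.row S},
      (· ᵥ* α) '' (compSlack α m x ∩ {l | support l ⊆ S}) := by
    refine Subset.antisymm ?_ (iUnion_subset fun S => image_mono inter_subset_left)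
    rintro _ ⟨l, hl, rfl⟩
    obtain ⟨s, hs, hsl, hind⟩ := exists_nonneg_mul_linearIndepOn α l
    exact mem_iUnion.2
      ⟨⟨_, hind⟩, s * l, ⟨mul_mem_compSlack hs hl, subset_refl (support (s * l))⟩, hsl⟩
  rw [hcover]
  exact isClosed_iUnion_of_finite fun S =>
    isClosed_image_vecMul_of_linearIndepOn S.2 isClosed_compSlack

end ActiveCone

lemma eventually_le_sub_mul {a v b : ℝ} (hv : a ≤ v) (hb : v = a → b ≤ 0) :
    ∀ᶠ t in 𝓝[>] (0 : ℝ), a ≤ v - t * b := by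
  rcases hv.lt_or_eq with hv | rfl
  · have hcont : Continuous fun t : ℝ => v - t * b := by fun_prop
    have : Tendsto (fun t : ℝ => v - t * b) (𝓝[>] 0) (𝓝 v) :=
      (hcont.tendsto' 0 v (by simp)).mono_left nhdsWithin_le_nhds
    exact (this.eventually (lt_mem_nhds hv)).mono fun t ht => ht.le
  · filter_upwards [self_mem_nhdsWithin] with t (ht : 0 < t)
    nlinarith [hb rfl]

section Farkas

variable {α : Matrix (Fin e) (Fin d) ℝ} {m : CM e} {x : Fin d → ℝ}

lemma mem_activeCone_of_isMinOn {c : Fin d → ℝ} (hx : x ∈ closedPolySet α m)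
    (hmin : IsMinOn (c ⬝ᵥ ·) (closedPolySet α m) x) : c ∈ activeCone α m x := by
  by_contra hc
  obtain ⟨f, u, hfu, hfc⟩ :=
    geometric_hahn_banach_closed_point convex_activeCone isClosed_activeCone hc
  have hu : 0 < u := by simpa using hfu 0 ⟨0, fun k => by simp, zero_vecMul α⟩
  have hf (v) (hv : v ∈ activeCone α m x) : f v ≤ 0 := by
    by_contra! h
    have := hfu _ (smul_mem_activeCone hv (div_pos hu h).le)
    rw [map_smul, smul_eq_mul, div_mul_cancel₀ _ h.ne'] at this
    exact lt_irrefl _ this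
  -- `f` is `v ↦ v ⬝ᵥ z`; moving from `x` against `z` stays feasible and decreases `c ⬝ᵥ ·`
  set z : Fin d → ℝ := fun j => f (fun j' => if j = j' then 1 else 0)
  have hfz (v : Fin d → ℝ) : f v = v ⬝ᵥ z := f.toLinearMap.pi_apply_eq_sum_univ v
  have hrow (k : Fin e) (a : ℝ) (h₁ : 0 < a → (α *ᵥ x) k = m.1 k)
      (h₂ : a < 0 → (α *ᵥ x) k = m.2 k) : a * (α *ᵥ z) k ≤ 0 := by
    have : (Pi.single k a ᵥ* α) ⬝ᵥ z ≤ 0 := hfz _ ▸ hf _ ⟨_, single_mem_compSlack h₁ h₂, rfl⟩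
    rwa [single_vecMul, smul_dotProduct, smul_eq_mul] at this
  have hfeas : ∀ᶠ t in 𝓝[>] (0 : ℝ), x - t • z ∈ closedPolySet α m := by
    simp only [closedPolySet, mem_ofPred_eq, mem_Icc, Pi.le_def, ← forall_and, mulVec_sub,
      mulVec_smul, Pi.sub_apply, Pi.smul_apply, smul_eq_mul]
    refine eventually_all.2 fun k => (eventually_le_sub_mul (hx.1 k) fun h => ?_).and ?_
    · simpa using hrow k 1 (fun _ => h) (by norm_num)
    · have := eventually_le_sub_mul (neg_le_neg (hx.2 k)) (b := -(α *ᵥ z) k) fun h => by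
        simpa using hrow k (-1) (by norm_num) fun _ => neg_inj.1 h
      exact this.mono fun t ht => by linarith
  obtain ⟨t, ht, htpos⟩ := (hfeas.and self_mem_nhdsWithin).exists
  have := hmin ht
  simp only [mem_ofPred_eq, dotProduct_sub, dotProduct_smul, smul_eq_mul, ← hfz] at this
  nlinarith [mul_pos (show (0 : ℝ) < t from htpos) (hu.trans hfc)]

end Farkas

section Attainment

variable {α : Matrix (Fin e) (Fin d) ℝ} {m : CM e}

lemma exists_isMinOn_mulVec (hQ : (closedPolySet α m).Nonempty) (i : Fin e) :
    ∃ x ∈ closedPolySet α m, IsMinOn (fun y => (α *ᵥ y) i) (closedPolySet α m) x := by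
  -- the polytope may be unbounded, but its image under `α` is compact (a subspace meets a box)
  have hK : IsCompact (range (α *ᵥ ·) ∩ Icc m.1 m.2) := by
    refine isCompact_Icc.inter_left ?_
    have := (LinearMap.range (mulVecLin α)).closed_of_finiteDimensional
    rwa [LinearMap.coe_range] at this
  obtain ⟨x₀, hx₀⟩ := hQ
  obtain ⟨_, ⟨⟨x, rfl⟩, hx⟩, hmin⟩ :=
    hK.exists_isMinOn ⟨_, mem_range_self x₀, hx₀⟩ (continuous_apply i).continuousOn
  exact ⟨x, hx, fun y hy => hmin ⟨mem_range_self y, hy⟩⟩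

lemma exists_mulVec_eq_opt_fst (hQ : (closedPolySet α m).Nonempty) (i : Fin e) :
    ∃ x ∈ closedPolySet α m, (α *ᵥ x) i = (Opt α m).1 i := by
  obtain ⟨x, hx, hmin⟩ := exists_isMinOn_mulVec hQ i
  obtain ⟨l, hl, hli : l ᵥ* α = α i⟩ := mem_activeCone_of_isMinOn (c := α i) hx hmin
  obtain ⟨s, hs, hsl, hind⟩ := exists_nonneg_mul_linearIndepOn α l
  have hΛ : s * l ∈ Lambda α i := mem_Lambda_of_linearIndepOn (hsl.trans hli) hind
  have hval : dualValue m (s * l) = (α *ᵥ x) i := by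
    rw [dualValue_eq_of_mem_compSlack (mul_mem_compSlack hs hl), hsl, hli]
    rfl
  exact ⟨x, hx, le_antisymm (hval ▸ dualValue_le_opt_fst hΛ) (opt_fst_le_mulVec ⟨_, hΛ⟩ hx)⟩

lemma exists_mulVec_eq_opt_snd (hQ : (closedPolySet α m).Nonempty) (i : Fin e) :
    ∃ x ∈ closedPolySet α m, (α *ᵥ x) i = (Opt α m).2 i := by
  obtain ⟨x, hx, hxi⟩ := exists_mulVec_eq_opt_fst (m := -m.swap)
    (by rw [closedPolySet_neg_swap]; exact hQ.neg) i
  rw [closedPolySet_neg_swap] at hx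
  exact ⟨-x, hx, by simp [mulVec_neg, hxi, opt_neg_swap_fst]⟩

end Attainment

end

theorem statement_1_general {d e : ℕ}
    (α : Matrix (Fin e) (Fin d) ℝ) (hα : Nondeg α) (m : CM e)
    (hne : (PolySet α m).Nonempty) :
    PolySet α (Opt α m) = PolySet α m ∧
    ∀ i : Fin e,
      (∃ x ∈ closure (PolySet α m), α.mulVec x i = (Opt α m).1 i) ∧
      (∃ y ∈ closure (PolySet α m), α.mulVec y i = (Opt α m).2 i) := by
  have hQ : (closedPolySet α m).Nonempty := hne.mono polySet_subset_closedPolySet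
  refine ⟨polySet_opt hα.1, fun i => ⟨?_, ?_⟩⟩
  · obtain ⟨x, hx, hxi⟩ := exists_mulVec_eq_opt_fst hQ i
    exact ⟨x, closedPolySet_subset_closure hne hx, hxi⟩
  · obtain ⟨y, hy, hyi⟩ := exists_mulVec_eq_opt_snd hQ i
    exact ⟨y, closedPolySet_subset_closure hne hy, hyi⟩

/-- if `P^α_m` is nonempty, then `P^α_{O(m)} = P^α_m` and every constraint
of `P^α_{O(m)}` is active. -/
theorem statement_1 {d e : ℕ} (hd : 1 ≤ d) (hde : d ≤ e)
    (α : Matrix (Fin e) (Fin d) ℝ) (hα : Nondeg α) (m : CM e)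
    (hne : (PolySet α m).Nonempty) :
    PolySet α (Opt α m) = PolySet α m ∧
    ∀ i : Fin e,
      (∃ x ∈ closure (PolySet α m), α.mulVec x i = (Opt α m).1 i) ∧
      (∃ y ∈ closure (PolySet α m), α.mulVec y i = (Opt α m).2 i) :=
  statement_1_general α hα m hne
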